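/- Let X be a separable F-space (a separable complete metrizable topological vector space) and let (T_i)_{i∈ℕ} be countably many continuous linear operators on X. Assume there exist a dense subset X₀ ⊆ X, mappings S_i : X₀ → X₀ (i ∈ ℕ), and a real number c > 1 such that for every x ∈ X₀: (1) the series ∑_{n≥0} T_i^n(x) and ∑_{n≥0} S_i^n(x) converge unconditionally, uniformly for i ∈ ℕ; (2) the series ∑_{n≥(c−1)m} T_i^m(S_j^{m+n}(x)) converges unconditionally, uniformly for m ∈ ℕ and i ≠ j ∈ ℕ; (3) the series ∑_{(c−1)m/c ≤ n ≤ m} T_i^m(S_j^{m−n}(x)) converges unconditionally, uniformly for m ∈ ℕ and i ≠ j ∈ ℕ; (4) T_i(S_i(x)) = x for every i ∈ ℕ. Then there exists a vector x ∈ X which is frequently hypercyclic for every T_i, i ∈ ℕ. -/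

import Mathlib

open Filter Topology

/-- Lower density of a set of natural numbers:
`liminf card(E ∩ [0,n]) / (n+1)`. -/
noncomputable def lowerDensity (E : Set ℕ) : ℝ :=
  Filter.liminf (fun n : ℕ =>
    (∑ k ∈ Finset.range (n + 1), Set.indicator E (fun _ => (1 : ℝ)) k) / ((n : ℝ) + 1))
    Filter.atTop

/-- A family of series `∑_{n ∈ R i} f i n` converges unconditionally, uniformly for `i : ι`. -/
def UnifUncondConv {ι Y : Type*} [AddCommGroup Y] [TopologicalSpace Y]
    (f : ι → ℕ → Y) (R : ι → Set ℕ) : Prop :=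
  ∀ V ∈ nhds (0 : Y), ∃ N : ℕ, ∀ i : ι, ∀ F : Finset ℕ,
    (∀ n ∈ F, N ≤ n ∧ n ∈ R i) → (∑ n ∈ F, f i n) ∈ V


/-!
Fix a dense sequence `(z l)` in `X₀` and list the pairs `(i, z l)` as `p s = (i_s, z_s)`, each
pair occurring for infinitely many `s`. We build disjoint sets `A_s ⊆ ℕ` of positive lower
density whose points are far apart: points `n < m` of `A_t`, `A_s` satisfy `m - n > θ s, θ t` for
a prescribed fast-growing `θ`, and `c * n ≤ m` when `s ≠ t`. Then
`x = ∑_s ∑_{n ∈ A_s} S_{i_s}^n z_s` converges by (1), and for `M ∈ A_s` the term `n = M` of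
`T_{i_s}^M x` is `z_s` by (4), while by (1)–(3) the other terms, grouped by `t` and by the side of
`M` they lie on, add up to an element of `W s`, where `W` is a basis of neighbourhoods of `0` with
`W (k + 1) + W (k + 1) ⊆ W k`. Hence `T_{i_s}^M x ∈ z_s + W s` for all `M ∈ A_s`.
-/

open scoped Pointwise

section HalvingBasis

variable {X : Type*} [AddCommGroup X] [TopologicalSpace X]

structure IsHalvingBasis (W : ℕ → Set X) : Prop where
  hasAntitoneBasis : (𝓝 (0 : X)).HasAntitoneBasis W
  add_subset : ∀ n, W (n + 1) + W (n + 1) ⊆ W n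

theorem exists_isHalvingBasis (X : Type*) [AddCommGroup X] [TopologicalSpace X]
    [IsTopologicalAddGroup X] [FirstCountableTopology X] : ∃ W : ℕ → Set X, IsHalvingBasis W :=
  let ⟨W, hW, hadd⟩ := IsTopologicalAddGroup.exists_antitone_basis_nhds_zero X
  ⟨W, hW, hadd⟩

namespace IsHalvingBasis

variable {W : ℕ → Set X}

theorem mem_nhds (hW : IsHalvingBasis W) (n : ℕ) : W n ∈ 𝓝 (0 : X) :=
  hW.hasAntitoneBasis.mem n

theorem zero_mem (hW : IsHalvingBasis W) (n : ℕ) : (0 : X) ∈ W n :=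
  mem_of_mem_nhds (hW.mem_nhds n)

theorem antitone (hW : IsHalvingBasis W) : Antitone W :=
  hW.hasAntitoneBasis.antitone

theorem add_mem (hW : IsHalvingBasis W) {n : ℕ} {a b : X} (ha : a ∈ W (n + 1))
    (hb : b ∈ W (n + 1)) : a + b ∈ W n :=
  hW.add_subset n (Set.add_mem_add ha hb)

theorem sum_range_mem (hW : IsHalvingBasis W) {z : ℕ → X} {r : ℕ}
    (hz : ∀ t, z t ∈ W (r + t + 1)) (n : ℕ) : ∑ t ∈ Finset.range n, z t ∈ W r := by
  induction n generalizing r z with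
  | zero => simpa using hW.zero_mem r
  | succ n ih =>
    rw [Finset.sum_range_succ']
    refine hW.add_mem (ih fun t => ?_) (by simpa using hz 0)
    simpa [add_right_comm, add_assoc] using hz (t + 1)

theorem sum_mem (hW : IsHalvingBasis W) {z : ℕ → X} {r : ℕ} {G : Finset ℕ}
    (hz : ∀ t ∈ G, z t ∈ W (r + t + 1)) : ∑ t ∈ G, z t ∈ W r := by
  classical
  have hG : G ⊆ Finset.range (G.sup id + 1) := fun t ht =>
    Finset.mem_range_succ_iff.2 (Finset.le_sup (f := id) ht)
  rw [← Finset.inter_eq_right.2 hG, ← Finset.sum_ite_mem]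
  refine hW.sum_range_mem (fun t => ?_) _
  split_ifs with ht
  exacts [hz t ht, hW.zero_mem _]

theorem sum_mem_of_fiberwise (hW : IsHalvingBasis W) (β : ℕ → ℕ) {g : ℕ → X} {F : Finset ℕ}
    {r : ℕ} (h : ∀ t, ∑ n ∈ F with β n = t, g n ∈ W (r + t + 1)) : ∑ n ∈ F, g n ∈ W r := by
  rw [← Finset.sum_fiberwise_of_maps_to fun n hn => Finset.mem_image_of_mem β hn]
  exact hW.sum_mem fun t _ => h t

theorem closure_subset [IsTopologicalAddGroup X] (hW : IsHalvingBasis W) (r : ℕ) :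
    closure (W (r + 1)) ⊆ W r := by
  intro a ha
  have hnhds : (fun w => a - w) ⁻¹' W (r + 1) ∈ 𝓝 a :=
    (continuous_const.sub continuous_id).continuousAt.preimage_mem_nhds
      (by simpa using hW.mem_nhds _)
  obtain ⟨w, hwa, hw⟩ := mem_closure_iff_nhds.1 ha _ hnhds
  simpa using hW.add_mem hw hwa

theorem mem_of_tendsto [IsTopologicalAddGroup X] (hW : IsHalvingBasis W) {α : Type*}
    {l : Filter α} [l.NeBot] {f : α → X} {a : X} {r : ℕ} (hf : Tendsto f l (𝓝 a))
    (h : ∀ᶠ x in l, f x ∈ W (r + 1)) : a ∈ W r :=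
  hW.closure_subset r (mem_closure_of_tendsto hf h)

end IsHalvingBasis

end HalvingBasis

theorem IsHalvingBasis.summable_of_fiberwise {X : Type*} [AddCommGroup X] [UniformSpace X]
    [IsUniformAddGroup X] [CompleteSpace X] {W : ℕ → Set X} (hW : IsHalvingBasis W)
    (β : ℕ → ℕ) {g : ℕ → X}
    (hconv : ∀ t r, ∃ N, ∀ F : Finset ℕ, (∀ n ∈ F, N ≤ n ∧ β n = t) → ∑ n ∈ F, g n ∈ W r)
    (htail : ∀ t (F : Finset ℕ), (∀ n ∈ F, β n = t) → ∑ n ∈ F, g n ∈ W (2 * t)) :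
    Summable g := by
  classical
  choose N hN using hconv
  refine summable_iff_vanishing.2 fun e he => ?_
  obtain ⟨k, hk⟩ := hW.hasAntitoneBasis.mem_iff.1 he
  refine ⟨Finset.range ((Finset.range (k + 1)).sup fun t => N t (k + t + 1)), fun F hF => ?_⟩
  refine hk (hW.sum_mem_of_fiberwise β fun t => ?_)
  rcases le_or_gt t k with htk | htk
  · refine hN t _ _ fun n hn => ⟨?_, (Finset.mem_filter.1 hn).2⟩
    have hnF : n ∉ Finset.range _ := Finset.disjoint_left.1 hF (Finset.mem_filter.1 hn).1
    have hNt := Finset.le_sup (f := fun t => N t (k + t + 1)) (Finset.mem_range_succ_iff.2 htk)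
    simp only [Finset.mem_range, not_lt] at hnF
    exact hNt.trans hnF
  · exact hW.antitone (by omega) (htail t _ fun n hn => (Finset.mem_filter.1 hn).2)

section Density

noncomputable def countUpTo (E : Set ℕ) (n : ℕ) : ℝ :=
  ∑ k ∈ Finset.range (n + 1), E.indicator (fun _ => (1 : ℝ)) k

theorem countUpTo_nonneg (E : Set ℕ) (n : ℕ) : 0 ≤ countUpTo E n :=
  Finset.sum_nonneg fun _ _ => Set.indicator_nonneg (fun _ _ => zero_le_one) _

theorem countUpTo_le (E : Set ℕ) (n : ℕ) : countUpTo E n ≤ n + 1 := by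
  calc countUpTo E n ≤ ∑ _k ∈ Finset.range (n + 1), (1 : ℝ) :=
        Finset.sum_le_sum fun _ _ => Set.indicator_le_self' (fun _ _ => zero_le_one) _
    _ = n + 1 := by simp

theorem countUpTo_mono {E : Set ℕ} {m n : ℕ} (hmn : m ≤ n) : countUpTo E m ≤ countUpTo E n :=
  Finset.sum_le_sum_of_subset_of_nonneg (Finset.range_subset_range.2 (by omega))
    fun _ _ _ => Set.indicator_nonneg (fun _ _ => zero_le_one) _

theorem card_le_countUpTo {E : Set ℕ} {n : ℕ} {P : Finset ℕ} (hP : ∀ k ∈ P, k ≤ n ∧ k ∈ E) :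
    (P.card : ℝ) ≤ countUpTo E n := by
  have hPn : P ⊆ Finset.range (n + 1) := fun k hk => Finset.mem_range_succ_iff.2 (hP k hk).1
  calc (P.card : ℝ) = ∑ k ∈ P, E.indicator (fun _ => (1 : ℝ)) k := by
        rw [Finset.sum_congr rfl fun k hk => Set.indicator_of_mem (hP k hk).2 _]; simp
    _ ≤ countUpTo E n := Finset.sum_le_sum_of_subset_of_nonneg hPn
        fun _ _ _ => Set.indicator_nonneg (fun _ _ => zero_le_one) _

theorem countUpTo_div_mem_Icc (E : Set ℕ) (n : ℕ) :
    countUpTo E n / ((n : ℝ) + 1) ∈ Set.Icc 0 1 :=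
  ⟨div_nonneg (countUpTo_nonneg E n) (by positivity),
    (div_le_one (by positivity)).2 (countUpTo_le E n)⟩

theorem lowerDensity_mono {E F : Set ℕ} (hEF : E ⊆ F) : lowerDensity E ≤ lowerDensity F :=
  liminf_le_liminf (Eventually.of_forall fun n => by gcongr)
    (isBoundedUnder_of ⟨0, fun n => (countUpTo_div_mem_Icc E n).1⟩)
    (isBoundedUnder_of ⟨1, fun n => (countUpTo_div_mem_Icc F n).2⟩).isCoboundedUnder_ge

theorem lowerDensity_pos_of_blocks {E : Set ℕ} {b : ℕ → ℕ} {C : ℝ} (hC : 0 < C)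
    (hb : ∀ n, ∃ q, n < b q) (hcount : ∀ q, (b (q + 1) : ℝ) ≤ C * countUpTo E (b q)) :
    0 < lowerDensity E := by
  classical
  refine (inv_pos.2 hC).trans_le (le_liminf_of_le
    (isBoundedUnder_of ⟨1, fun n => (countUpTo_div_mem_Icc E n).2⟩).isCoboundedUnder_ge
    (eventually_atTop.2 ⟨b 0, fun n hn => ?_⟩))
  -- `n` lies in `[b q, b (q + 1))` for some `q`
  obtain ⟨q, hq⟩ : ∃ q, Nat.find (hb n) = q + 1 :=
    Nat.exists_eq_add_one.2 (Nat.pos_of_ne_zero fun h0 => by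
      have := Nat.find_spec (hb n); rw [h0] at this; omega)
  have hnext : n < b (q + 1) := hq ▸ Nat.find_spec (hb n)
  have hprev : b q ≤ n := not_lt.1 (Nat.find_min (hb n) (by omega))
  rw [le_div_iff₀ (by positivity), inv_mul_le_iff₀ hC]
  calc (n : ℝ) + 1 ≤ b (q + 1) := by exact_mod_cast hnext
    _ ≤ C * countUpTo E (b q) := hcount q
    _ ≤ C * countUpTo E n := by gcongr; exact countUpTo_mono hprev

end Density

section Slots

variable (D : ℕ) (θ : ℕ → ℕ)

/-- The integers are cut into slots `[D ^ k, D ^ (k + 1))`; the slot `k` is reserved for the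
label `padicValNat 2 k`, so that each label owns the slots `2 ^ s * (2 * j + 1)`, a set of
indices with bounded gaps. -/
def slotLabel (n : ℕ) : ℕ :=
  padicValNat 2 (Nat.log D n)

/-- In its slot `k`, a label `s` uses the points of `[D ^ k, 2 * D ^ k]` that are `θ s + 1`
apart, provided `θ s < k`. -/
def slotSet : Set ℕ :=
  {n | θ (slotLabel D n) < Nat.log D n ∧ n ≤ 2 * D ^ Nat.log D n ∧
    θ (slotLabel D n) + 1 ∣ n - D ^ Nat.log D n}

variable {D θ}

theorem padicValNat_two_pow_mul_odd (s j : ℕ) : padicValNat 2 (2 ^ s * (2 * j + 1)) = s := by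
  rw [padicValNat.mul (by positivity) (by omega), padicValNat.prime_pow,
    padicValNat.eq_zero_of_not_dvd (by omega), add_zero]

theorem log_eq_of_le_two_mul_pow (hD : 3 ≤ D) {k n : ℕ} (h₁ : D ^ k ≤ n) (h₂ : n ≤ 2 * D ^ k) :
    Nat.log D n = k :=
  Nat.log_eq_of_pow_le_of_lt_pow h₁ (by rw [pow_succ]; nlinarith [pow_pos (by omega : 0 < D) k])

theorem mem_slotSet (hD : 3 ≤ D) {k i : ℕ} (hk : θ (padicValNat 2 k) < k)
    (hi : i * (θ (padicValNat 2 k) + 1) ≤ D ^ k) :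
    D ^ k + i * (θ (padicValNat 2 k) + 1) ∈ slotSet D θ ∧
      slotLabel D (D ^ k + i * (θ (padicValNat 2 k) + 1)) = padicValNat 2 k := by
  have hlog : Nat.log D (D ^ k + i * (θ (padicValNat 2 k) + 1)) = k :=
    log_eq_of_le_two_mul_pow hD (Nat.le_add_right _ _) (by omega)
  refine ⟨?_, by rw [slotLabel, hlog]⟩
  simp only [slotSet, slotLabel, Set.mem_ofPred_eq, hlog]
  exact ⟨hk, by omega, by simp⟩

theorem lt_of_mem_slotSet {n : ℕ} (hn : n ∈ slotSet D θ) : θ (slotLabel D n) < n :=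
  hn.1.trans_le (Nat.log_le_self D n)

theorem slotSet_separated (hD : 4 ≤ D) {m n : ℕ} (hm : m ∈ slotSet D θ) (hn : n ∈ slotSet D θ)
    (hnm : n < m) :
    θ (slotLabel D m) < m - n ∧ θ (slotLabel D n) < m - n ∧
      (slotLabel D m ≠ slotLabel D n → D * n ≤ 2 * m) := by
  obtain ⟨hθm, hm2, hdvdm⟩ := hm
  obtain ⟨hθn, hn2, hdvdn⟩ := hn
  have hm0 : m ≠ 0 := by rintro rfl; simp at hθm
  have hn0 : n ≠ 0 := by rintro rfl; simp at hθn
  have hDm := Nat.pow_log_le_self D hm0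
  have hDn := Nat.pow_log_le_self D hn0
  rcases (Nat.log_mono_right (b := D) hnm.le).eq_or_lt with hlog | hlog
  · -- same slot: the two points differ by a multiple of `θ s + 1`
    have hlabel : slotLabel D n = slotLabel D m := by simp only [slotLabel, hlog]
    rw [hlabel] at hdvdn ⊢
    rw [hlog] at hdvdn hDn
    have hdvd : θ (slotLabel D m) + 1 ∣ m - n := by
      have := Nat.dvd_sub hdvdm hdvdn
      rwa [show m - D ^ Nat.log D m - (n - D ^ Nat.log D m) = m - n by omega] at this
    have := Nat.le_of_dvd (by omega) hdvd
    exact ⟨by omega, by omega, fun h => absurd rfl h⟩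
  · -- different slots: `n ≤ 2 * D ^ k` while `D ^ (k + 1) ≤ m`
    obtain ⟨k, hk⟩ : ∃ k, Nat.log D m = k + 1 := ⟨_, (Nat.succ_pred_eq_of_pos (by omega)).symm⟩
    rw [hk] at hDm hθm
    have hnk : 2 * D ^ Nat.log D n ≤ 2 * D ^ k := by gcongr <;> omega
    have hkD : k + 1 ≤ 2 * D ^ k := calc
      k + 1 ≤ 2 ^ (k + 1) := Nat.lt_two_pow_self.le
      _ = 2 * 2 ^ k := by ring
      _ ≤ 2 * D ^ k := by gcongr; omega
    rw [pow_succ] at hDm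
    have hD4 : 4 * D ^ k ≤ D ^ k * D := by rw [mul_comm]; gcongr
    refine ⟨by omega, by omega, fun _ => ?_⟩
    calc D * n ≤ D * (2 * D ^ k) := by gcongr; omega
      _ = 2 * (D ^ k * D) := by ring
      _ ≤ 2 * m := by omega

theorem pow_le_mul_countUpTo_slotSet (hD : 3 ≤ D) {k : ℕ} (hk : θ (padicValNat 2 k) < k) :
    ((D ^ k : ℕ) : ℝ) ≤ ((θ (padicValNat 2 k) + 1 : ℕ) : ℝ) *
      countUpTo {n ∈ slotSet D θ | slotLabel D n = padicValNat 2 k} (2 * D ^ k) := by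
  classical
  set a := θ (padicValNat 2 k) + 1
  set L := D ^ k / a
  set P := (Finset.range (L + 1)).image fun i => D ^ k + i * a
  have hcard : P.card = L + 1 := by
    rw [Finset.card_image_of_injective _ fun i j hij => by
      simpa [a] using (add_left_cancel hij : i * a = j * a), Finset.card_range]
  have hP : ∀ n ∈ P, n ≤ 2 * D ^ k ∧ n ∈ {n ∈ slotSet D θ | slotLabel D n = padicValNat 2 k} := by
    simp only [P, Finset.mem_image, Finset.mem_range]
    rintro _ ⟨i, hi, rfl⟩
    have hia : i * a ≤ D ^ k :=
      (Nat.mul_le_mul_right a (Nat.lt_succ_iff.1 hi)).trans (Nat.div_mul_le_self _ _)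
    obtain ⟨hmem, hlabel⟩ := mem_slotSet hD hk hia
    exact ⟨by omega, hmem, hlabel⟩
  have hLa : D ^ k ≤ a * P.card := by
    have : D ^ k < L * a + a := Nat.lt_div_mul_add (by omega)
    rw [hcard, mul_add, mul_one, mul_comm]; omega
  calc ((D ^ k : ℕ) : ℝ) ≤ ((a * P.card : ℕ) : ℝ) := by exact_mod_cast hLa
    _ = (a : ℝ) * P.card := by push_cast; ring
    _ ≤ _ := by gcongr; exact card_le_countUpTo hP

theorem lowerDensity_slotSet_pos (hD : 3 ≤ D) (s : ℕ) :
    0 < lowerDensity {n ∈ slotSet D θ | slotLabel D n = s} := by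
  set k : ℕ → ℕ := fun q => 2 ^ s * (2 * (θ s + q) + 1) with hk
  have hlabel : ∀ q, padicValNat 2 (k q) = s := fun q => padicValNat_two_pow_mul_odd _ _
  have hθk : ∀ q, θ s < k q := fun q => by
    simp only [hk]; nlinarith [Nat.one_le_two_pow (n := s)]
  have hkq : ∀ q, k (q + 1) = k q + 2 ^ (s + 1) := fun q => by simp only [hk]; ring
  refine lowerDensity_pos_of_blocks (b := fun q => 2 * D ^ k q)
    (C := 2 * D ^ 2 ^ (s + 1) * (θ s + 1 : ℕ)) (by positivity) (fun n => ⟨n, ?_⟩) (fun q => ?_)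
  · have : n < k n := by simp only [hk]; nlinarith [Nat.one_le_two_pow (n := s)]
    have := Nat.lt_pow_self (n := k n) (by omega : 1 < D)
    omega
  have hslot := pow_le_mul_countUpTo_slotSet hD (k := k q) (by rw [hlabel]; exact hθk q)
  rw [hlabel] at hslot
  calc ((2 * D ^ k (q + 1) : ℕ) : ℝ) = 2 * D ^ 2 ^ (s + 1) * ((D ^ k q : ℕ) : ℝ) := by
        rw [hkq]; push_cast; ring
    _ ≤ 2 * D ^ 2 ^ (s + 1) * (((θ s + 1 : ℕ) : ℝ) *
          countUpTo {n ∈ slotSet D θ | slotLabel D n = s} (2 * D ^ k q)) := by gcongr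
    _ = _ := by push_cast; ring

end Slots

structure IsSeparatedLabelling (c : ℝ) (θ : ℕ → ℕ) (B : Set ℕ) (τ : ℕ → ℕ) : Prop where
  lowerDensity_pos : ∀ s, 0 < lowerDensity {n ∈ B | τ n = s}
  lt_of_mem : ∀ n ∈ B, θ (τ n) < n
  separated : ∀ m ∈ B, ∀ n ∈ B, n < m →
    θ (τ m) < m - n ∧ θ (τ n) < m - n ∧ (τ m ≠ τ n → c * n ≤ m)

theorem exists_isSeparatedLabelling (c : ℝ) (θ : ℕ → ℕ) :
    ∃ (B : Set ℕ) (τ : ℕ → ℕ), IsSeparatedLabelling c θ B τ := by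
  set D := 2 * (⌈c⌉₊ + 2)
  refine ⟨slotSet D θ, slotLabel D, lowerDensity_slotSet_pos (by omega),
    fun n hn => lt_of_mem_slotSet hn, fun m hm n hn hnm => ?_⟩
  obtain ⟨hθm, hθn, hsep⟩ := slotSet_separated (by omega) hm hn hnm
  refine ⟨hθm, hθn, fun hne => ?_⟩
  have hDn : (D : ℝ) * n ≤ 2 * m := by exact_mod_cast hsep hne
  have hcD : 2 * c ≤ D := by
    simp only [D]; push_cast; linarith [Nat.le_ceil c]
  nlinarith [(Nat.cast_nonneg n : (0 : ℝ) ≤ n)]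

section Criterion

variable {𝕜 X : Type*} [Semiring 𝕜] [AddCommGroup X] [TopologicalSpace X] [Module 𝕜 X]
  {T : ℕ → X →L[𝕜] X} {X₀ : Set X} {S : ℕ → X₀ → X₀} {c : ℝ}

theorem pow_apply_iterate (h4 : ∀ x : X₀, ∀ i : ℕ, (T i) ((S i x : X₀) : X) = (x : X))
    (i n : ℕ) (x : X₀) : (T i ^ n) (((S i)^[n] x : X₀) : X) = x := by
  induction n with
  | zero => simp
  | succ n ih => rw [Function.iterate_succ_apply', pow_succ, mul_apply_eq_comp, h4, ih]

theorem pow_apply_iterate_of_le (h4 : ∀ x : X₀, ∀ i : ℕ, (T i) ((S i x : X₀) : X) = (x : X))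
    (i : ℕ) {n M : ℕ} (h : n ≤ M) (x : X₀) :
    (T i ^ M) (((S i)^[n] x : X₀) : X) = (T i ^ (M - n)) (x : X) := by
  rw [← Nat.sub_add_cancel h, pow_add, mul_apply_eq_comp, Nat.add_sub_cancel,
    pow_apply_iterate h4]

theorem pow_apply_iterate_of_ge (h4 : ∀ x : X₀, ∀ i : ℕ, (T i) ((S i x : X₀) : X) = (x : X))
    (i : ℕ) {n M : ℕ} (h : M ≤ n) (x : X₀) :
    (T i ^ M) (((S i)^[n] x : X₀) : X) = (((S i)^[n - M] x : X₀) : X) := by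
  rw [← Nat.add_sub_cancel' h, Function.iterate_add_apply, Nat.add_sub_cancel_left,
    pow_apply_iterate h4]

theorem exists_sum_below_mem (hc : 0 < c)
    (h1T : ∀ x : X₀, UnifUncondConv
      (fun i : ℕ => fun n => ((T i) ^ n) (x : X)) (fun _ => Set.univ))
    (h3 : ∀ x : X₀, UnifUncondConv
      (fun v : {v : ℕ × ℕ × ℕ // v.1 ≠ v.2.1} => fun n =>
        ((T v.val.1) ^ v.val.2.2) (((S v.val.2.1)^[v.val.2.2 - n] x : X₀) : X))
      (fun v => {n | (c - 1) / c * (v.val.2.2 : ℝ) ≤ (n : ℝ) ∧ n ≤ v.val.2.2}))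
    (h4 : ∀ x : X₀, ∀ i : ℕ, (T i) ((S i x : X₀) : X) = (x : X))
    (x : X₀) {V : Set X} (hV : V ∈ 𝓝 (0 : X)) :
    ∃ N, ∀ i j M (G : Finset ℕ), (∀ n ∈ G, n + N ≤ M ∧ (i ≠ j → c * n ≤ M)) →
      ∑ n ∈ G, (T i ^ M) (((S j)^[n] x : X₀) : X) ∈ V := by
  classical
  obtain ⟨N₁, hN₁⟩ := h1T x V hV
  obtain ⟨N₃, hN₃⟩ := h3 x V hV
  refine ⟨max N₁ N₃, fun i j M G hG => ?_⟩
  have hinj : Set.InjOn (M - ·) G := fun a ha b hb hab => by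
    have := (hG a ha).1; have := (hG b hb).1; simp only at hab; omega
  rcases eq_or_ne i j with rfl | hij
  · rw [Finset.sum_congr rfl fun n hn =>
        pow_apply_iterate_of_le h4 i (by have := (hG n hn).1; omega) x,
      ← Finset.sum_image (f := fun m => (T i ^ m) (x : X)) hinj]
    refine hN₁ i _ fun m hm => ⟨?_, trivial⟩
    obtain ⟨n, hn, rfl⟩ := Finset.mem_image.1 hm
    have := (hG n hn).1; omega
  · have hsum : ∑ n ∈ G, (T i ^ M) (((S j)^[n] x : X₀) : X) =
        ∑ m ∈ G.image (M - ·), (T i ^ M) (((S j)^[M - m] x : X₀) : X) := by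
      rw [Finset.sum_image hinj]
      exact Finset.sum_congr rfl fun n hn => by
        rw [Nat.sub_sub_self (by have := (hG n hn).1; omega : n ≤ M)]
    rw [hsum]
    refine hN₃ ⟨(i, j, M), hij⟩ _ fun m hm => ?_
    obtain ⟨n, hn, rfl⟩ := Finset.mem_image.1 hm
    obtain ⟨hnM, hcn⟩ := hG n hn
    refine ⟨by omega, ?_, Nat.sub_le M n⟩
    have hcn := hcn hij
    simp only [Nat.cast_sub (by omega : n ≤ M)]
    rw [div_mul_eq_mul_div, div_le_iff₀ hc]
    nlinarith

theorem exists_sum_above_mem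
    (h1S : ∀ x : X₀, UnifUncondConv
      (fun i : ℕ => fun n => (((S i)^[n] x : X₀) : X)) (fun _ => Set.univ))
    (h2 : ∀ x : X₀, UnifUncondConv
      (fun v : {v : ℕ × ℕ × ℕ // v.1 ≠ v.2.1} => fun n =>
        ((T v.val.1) ^ v.val.2.2) (((S v.val.2.1)^[v.val.2.2 + n] x : X₀) : X))
      (fun v => {n | (c - 1) * (v.val.2.2 : ℝ) ≤ (n : ℝ)}))
    (h4 : ∀ x : X₀, ∀ i : ℕ, (T i) ((S i x : X₀) : X) = (x : X))
    (x : X₀) {V : Set X} (hV : V ∈ 𝓝 (0 : X)) :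
    ∃ N, ∀ i j M (G : Finset ℕ), (∀ n ∈ G, M + N ≤ n ∧ (i ≠ j → c * M ≤ n)) →
      ∑ n ∈ G, (T i ^ M) (((S j)^[n] x : X₀) : X) ∈ V := by
  classical
  obtain ⟨N₁, hN₁⟩ := h1S x V hV
  obtain ⟨N₂, hN₂⟩ := h2 x V hV
  refine ⟨max N₁ N₂, fun i j M G hG => ?_⟩
  have hinj : Set.InjOn (· - M) G := fun a ha b hb hab => by
    have := (hG a ha).1; have := (hG b hb).1; simp only at hab; omega
  rcases eq_or_ne i j with rfl | hij
  · rw [Finset.sum_congr rfl fun n hn =>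
        pow_apply_iterate_of_ge h4 i (by have := (hG n hn).1; omega) x,
      ← Finset.sum_image (f := fun m => (((S i)^[m] x : X₀) : X)) hinj]
    refine hN₁ i _ fun m hm => ⟨?_, trivial⟩
    obtain ⟨n, hn, rfl⟩ := Finset.mem_image.1 hm
    have := (hG n hn).1; omega
  · have hsum : ∑ n ∈ G, (T i ^ M) (((S j)^[n] x : X₀) : X) =
        ∑ m ∈ G.image (· - M), (T i ^ M) (((S j)^[M + m] x : X₀) : X) := by
      rw [Finset.sum_image hinj]
      exact Finset.sum_congr rfl fun n hn => by
        rw [Nat.add_sub_cancel' (by have := (hG n hn).1; omega : M ≤ n)]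
    rw [hsum]
    refine hN₂ ⟨(i, j, M), hij⟩ _ fun m hm => ?_
    obtain ⟨n, hn, rfl⟩ := Finset.mem_image.1 hm
    obtain ⟨hnM, hcn⟩ := hG n hn
    refine ⟨by omega, ?_⟩
    have hcn := hcn hij
    simp only [Set.mem_ofPred_eq, Nat.cast_sub (by omega : M ≤ n)]
    linarith

structure IsGapThreshold (T : ℕ → X →L[𝕜] X) (S : ℕ → X₀ → X₀) (c : ℝ) (W : ℕ → Set X)
    (N : X₀ → ℕ → ℕ) : Prop where
  below : ∀ z r i j M (G : Finset ℕ), (∀ n ∈ G, n + N z r ≤ M ∧ (i ≠ j → c * n ≤ M)) →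
    ∑ n ∈ G, (T i ^ M) (((S j)^[n] z : X₀) : X) ∈ W r
  above : ∀ z r i j M (G : Finset ℕ), (∀ n ∈ G, M + N z r ≤ n ∧ (i ≠ j → c * M ≤ n)) →
    ∑ n ∈ G, (T i ^ M) (((S j)^[n] z : X₀) : X) ∈ W r

theorem exists_isGapThreshold (hc : 0 < c)
    (h1T : ∀ x : X₀, UnifUncondConv
      (fun i : ℕ => fun n => ((T i) ^ n) (x : X)) (fun _ => Set.univ))
    (h1S : ∀ x : X₀, UnifUncondConv
      (fun i : ℕ => fun n => (((S i)^[n] x : X₀) : X)) (fun _ => Set.univ))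
    (h2 : ∀ x : X₀, UnifUncondConv
      (fun v : {v : ℕ × ℕ × ℕ // v.1 ≠ v.2.1} => fun n =>
        ((T v.val.1) ^ v.val.2.2) (((S v.val.2.1)^[v.val.2.2 + n] x : X₀) : X))
      (fun v => {n | (c - 1) * (v.val.2.2 : ℝ) ≤ (n : ℝ)}))
    (h3 : ∀ x : X₀, UnifUncondConv
      (fun v : {v : ℕ × ℕ × ℕ // v.1 ≠ v.2.1} => fun n =>
        ((T v.val.1) ^ v.val.2.2) (((S v.val.2.1)^[v.val.2.2 - n] x : X₀) : X))
      (fun v => {n | (c - 1) / c * (v.val.2.2 : ℝ) ≤ (n : ℝ) ∧ n ≤ v.val.2.2}))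
    (h4 : ∀ x : X₀, ∀ i : ℕ, (T i) ((S i x : X₀) : X) = (x : X))
    {W : ℕ → Set X} (hW : ∀ r, W r ∈ 𝓝 (0 : X)) : ∃ N, IsGapThreshold T S c W N := by
  choose N₁ hN₁ using fun z r => exists_sum_below_mem hc h1T h3 h4 z (hW r)
  choose N₂ hN₂ using fun z r => exists_sum_above_mem h1S h2 h4 z (hW r)
  refine ⟨fun z r => max (N₁ z r) (N₂ z r), fun z r i j M G hG => ?_, fun z r i j M G hG => ?_⟩
  · exact hN₁ z r i j M G fun n hn => ⟨by have := (hG n hn).1; omega, (hG n hn).2⟩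
  · exact hN₂ z r i j M G fun n hn => ⟨by have := (hG n hn).1; omega, (hG n hn).2⟩

/-- The terms of `x = ∑_s ∑_{n ∈ A_s} S_{i_s}^n z_s`, where `A_s = {n ∈ B | τ n = s}` and
`p s = (i_s, z_s)`. -/
noncomputable def gluedOrbit (S : ℕ → X₀ → X₀) (p : ℕ → ℕ × X₀) (B : Set ℕ) (τ : ℕ → ℕ) : ℕ → X :=
  B.indicator fun n => (((S (p (τ n)).1)^[n] (p (τ n)).2 : X₀) : X)

open Classical in
theorem sum_pow_gluedOrbit_of_fiber {p : ℕ → ℕ × X₀} {B : Set ℕ} {τ : ℕ → ℕ} (i M : ℕ) {t : ℕ}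
    {F : Finset ℕ} (hF : ∀ n ∈ F, τ n = t) :
    ∑ n ∈ F, (T i ^ M) (gluedOrbit S p B τ n) =
      ∑ n ∈ F with n ∈ B, (T i ^ M) (((S (p t).1)^[n] (p t).2 : X₀) : X) := by
  classical
  rw [Finset.sum_filter]
  refine Finset.sum_congr rfl fun n hn => ?_
  by_cases hnB : n ∈ B <;> simp [gluedOrbit, hnB, hF n hn]

end Criterion

section Construction

variable {𝕜 X : Type*} [Semiring 𝕜] [AddCommGroup X] [UniformSpace X] [IsUniformAddGroup X]
  [Module 𝕜 X] {T : ℕ → X →L[𝕜] X} {X₀ : Set X} {S : ℕ → X₀ → X₀} {c : ℝ} {W : ℕ → Set X}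
  {N : X₀ → ℕ → ℕ} {p : ℕ → ℕ × X₀} {θ : ℕ → ℕ} {B : Set ℕ} {τ : ℕ → ℕ}

theorem summable_gluedOrbit [CompleteSpace X] (hW : IsHalvingBasis W)
    (hN : IsGapThreshold T S c W N) (hθ : ∀ u, ∀ t ≤ u, N (p t).2 (2 * u + 3) ≤ θ u)
    (hB : IsSeparatedLabelling c θ B τ) : Summable (gluedOrbit S p B τ) := by
  have key : ∀ t r (F : Finset ℕ), (∀ n ∈ F, τ n = t) → (∀ n ∈ F, n ∈ B → N (p t).2 r ≤ n) →
      ∑ n ∈ F, gluedOrbit S p B τ n ∈ W r := fun t r F hF hFN => by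
    have := sum_pow_gluedOrbit_of_fiber (T := T) (S := S) (p := p) (B := B) (p t).1 0 hF
    simp only [pow_zero, one_apply_eq_self] at this
    rw [this]
    simpa using hN.above (p t).2 r (p t).1 (p t).1 0 _ fun n hn => by
      simp only [Finset.mem_filter] at hn
      exact ⟨by simpa using hFN n hn.1 hn.2, fun h => (h rfl).elim⟩
  refine hW.summable_of_fiberwise τ (fun t r => ⟨N (p t).2 r, fun F hF =>
    key t r F (fun n hn => (hF n hn).2) fun n hn _ => (hF n hn).1⟩) fun t F hF => ?_
  refine hW.antitone (by omega) (key t (2 * t + 3) F hF fun n hn hnB => ?_)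
  have := hB.lt_of_mem n hnB
  rw [hF n hn] at this
  exact (hθ t t le_rfl).trans this.le

theorem sum_pow_gluedOrbit_fiber_mem (hW : IsHalvingBasis W) (hN : IsGapThreshold T S c W N)
    (hθ : ∀ u, ∀ t ≤ u, N (p t).2 (2 * u + 3) ≤ θ u) (hB : IsSeparatedLabelling c θ B τ)
    {M : ℕ} (hM : M ∈ B) (t : ℕ) {F : Finset ℕ} (hF : ∀ n ∈ F, τ n = t ∧ n ≠ M) :
    ∑ n ∈ F, (T (p (τ M)).1 ^ M) (gluedOrbit S p B τ n) ∈ W (τ M + t + 2) := by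
  classical
  have hthreshold : ∀ k, θ (τ M) < k → θ t < k → N (p t).2 (2 * max (τ M) t + 3) < k :=
    fun k hM ht => (hθ _ t (le_max_right _ _)).trans_lt <| by
      rcases max_choice (τ M) t with hu | hu <;> rw [hu] <;> assumption
  have hlevel : W (2 * max (τ M) t + 3) ⊆ W (τ M + t + 3) := hW.antitone (by omega)
  rw [← Finset.sum_filter_add_sum_filter_not F (· < M)]
  refine hW.add_mem ?_ ?_
  · rw [sum_pow_gluedOrbit_of_fiber _ _ fun n hn => (hF n (Finset.mem_filter.1 hn).1).1]
    apply hlevel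
    apply hN.below
    intro n hn
    simp only [Finset.mem_filter] at hn
    obtain ⟨⟨hnF, hnM⟩, hnB⟩ := hn
    obtain ⟨hsep₁, hsep₂, hsep₃⟩ := hB.separated M hM n hnB hnM
    rw [(hF n hnF).1] at hsep₂ hsep₃
    have := hthreshold _ hsep₁ hsep₂
    exact ⟨by omega, fun hne => hsep₃ fun h => hne (by rw [h])⟩
  · rw [sum_pow_gluedOrbit_of_fiber _ _ fun n hn => (hF n (Finset.mem_filter.1 hn).1).1]
    apply hlevel
    apply hN.above
    intro n hn
    simp only [Finset.mem_filter, not_lt] at hn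
    obtain ⟨⟨hnF, hMn⟩, hnB⟩ := hn
    have hMn : M < n := lt_of_le_of_ne hMn (hF n hnF).2.symm
    obtain ⟨hsep₁, hsep₂, hsep₃⟩ := hB.separated n hnB M hM hMn
    rw [(hF n hnF).1] at hsep₁ hsep₃
    have := hthreshold _ hsep₂ hsep₁
    exact ⟨by omega, fun hne => hsep₃ fun h => hne (by rw [h])⟩

theorem pow_tsum_gluedOrbit_sub_mem (hW : IsHalvingBasis W) (hN : IsGapThreshold T S c W N)
    (hθ : ∀ u, ∀ t ≤ u, N (p t).2 (2 * u + 3) ≤ θ u) (hB : IsSeparatedLabelling c θ B τ)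
    (h4 : ∀ x : X₀, ∀ i : ℕ, (T i) ((S i x : X₀) : X) = (x : X))
    (hsum : Summable (gluedOrbit S p B τ)) {M : ℕ} (hM : M ∈ B) :
    (T (p (τ M)).1 ^ M) (∑' n, gluedOrbit S p B τ n) - (p (τ M)).2 ∈ W (τ M) := by
  classical
  have hLM : (T (p (τ M)).1 ^ M) (gluedOrbit S p B τ M) = (p (τ M)).2 := by
    simp only [gluedOrbit, Set.indicator_of_mem hM]
    exact pow_apply_iterate h4 _ _ _
  have hlim : Tendsto (fun F : Finset ℕ => ∑ n ∈ F, (T (p (τ M)).1 ^ M) (gluedOrbit S p B τ n))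
      atTop (𝓝 ((T (p (τ M)).1 ^ M) (∑' n, gluedOrbit S p B τ n))) :=
    hsum.hasSum.mapL _
  refine hW.mem_of_tendsto (hlim.sub_const _) ((eventually_ge_atTop {M}).mono fun F hF => ?_)
  rw [← Finset.add_sum_erase F _ (Finset.singleton_subset_iff.1 hF), hLM, add_sub_cancel_left]
  refine hW.sum_mem_of_fiberwise τ fun t => ?_
  rw [show τ M + 1 + t + 1 = τ M + t + 2 by ring]
  refine sum_pow_gluedOrbit_fiber_mem hW hN hθ hB hM t fun n hn => ?_
  simp only [Finset.mem_filter, Finset.mem_erase] at hn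
  exact ⟨hn.2, hn.1.1⟩

theorem exists_orbits_frequently_near [CompleteSpace X] (hW : IsHalvingBasis W)
    (hN : IsGapThreshold T S c W N)
    (h4 : ∀ x : X₀, ∀ i : ℕ, (T i) ((S i x : X₀) : X) = (x : X)) (p : ℕ → ℕ × X₀) :
    ∃ x : X, ∀ s, ∃ A : Set ℕ, 0 < lowerDensity A ∧
      ∀ M ∈ A, (T (p s).1 ^ M) x - (p s).2 ∈ W s := by
  -- the block `t` of the error at `M ∈ A_s` has to land in `W (s + t + 3) ⊇ W (2 * max s t + 3)`
  set θ : ℕ → ℕ := fun u => (Finset.range (u + 1)).sup fun t => N (p t).2 (2 * u + 3)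
  have hθ : ∀ u, ∀ t ≤ u, N (p t).2 (2 * u + 3) ≤ θ u := fun u t ht =>
    Finset.le_sup (f := fun t => N (p t).2 (2 * u + 3)) (Finset.mem_range_succ_iff.2 ht)
  obtain ⟨B, τ, hB⟩ := exists_isSeparatedLabelling c θ
  have hsum := summable_gluedOrbit hW hN hθ hB
  refine ⟨∑' n, gluedOrbit S p B τ n, fun s => ⟨{n ∈ B | τ n = s}, hB.lowerDensity_pos s, ?_⟩⟩
  rintro M ⟨hMB, rfl⟩
  exact pow_tsum_gluedOrbit_sub_mem hW hN hθ hB h4 hsum hMB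

end Construction

theorem stmt2_general {𝕜 X : Type*} [NontriviallyNormedField 𝕜]
    [AddCommGroup X] [UniformSpace X] [IsUniformAddGroup X]
    [Module 𝕜 X] [CompleteSpace X]
    [TopologicalSpace.MetrizableSpace X] [TopologicalSpace.SeparableSpace X]
    (T : ℕ → X →L[𝕜] X)
    (X₀ : Set X) (hX₀ : Dense X₀)
    (S : ℕ → X₀ → X₀)
    (c : ℝ) (hc : 1 < c)
    -- (1) ∑_{n≥0} T_i^n(x) and ∑_{n≥0} S_i^n(x) converge unconditionally, uniformly in i
    (h1T : ∀ x : X₀, UnifUncondConv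
      (fun i : ℕ => fun n => ((T i) ^ n) (x : X)) (fun _ => Set.univ))
    (h1S : ∀ x : X₀, UnifUncondConv
      (fun i : ℕ => fun n => (((S i)^[n] x : X₀) : X)) (fun _ => Set.univ))
    -- (2) ∑_{n ≥ (c−1)m} T_i^m (S_j^{m+n}(x)), uniformly in m and i ≠ j
    (h2 : ∀ x : X₀, UnifUncondConv
      (fun v : {v : ℕ × ℕ × ℕ // v.1 ≠ v.2.1} => fun n =>
        ((T v.val.1) ^ v.val.2.2) (((S v.val.2.1)^[v.val.2.2 + n] x : X₀) : X))
      (fun v => {n | (c - 1) * (v.val.2.2 : ℝ) ≤ (n : ℝ)}))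
    -- (3) ∑_{(c−1)m/c ≤ n ≤ m} T_i^m (S_j^{m−n}(x)), uniformly in m and i ≠ j
    (h3 : ∀ x : X₀, UnifUncondConv
      (fun v : {v : ℕ × ℕ × ℕ // v.1 ≠ v.2.1} => fun n =>
        ((T v.val.1) ^ v.val.2.2) (((S v.val.2.1)^[v.val.2.2 - n] x : X₀) : X))
      (fun v => {n | (c - 1) / c * (v.val.2.2 : ℝ) ≤ (n : ℝ) ∧ n ≤ v.val.2.2}))
    -- (4) T_i(S_i(x)) = x
    (h4 : ∀ x : X₀, ∀ i : ℕ, (T i) ((S i x : X₀) : X) = (x : X)) :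
    ∃ x : X, ∀ i : ℕ, ∀ U : Set X, IsOpen U → U.Nonempty →
      0 < lowerDensity {n : ℕ | (((T i) ^ n) x) ∈ U} := by
  obtain ⟨W, hW⟩ := exists_isHalvingBasis X
  obtain ⟨N, hN⟩ := exists_isGapThreshold (zero_lt_one.trans hc) h1T h1S h2 h3 h4 hW.mem_nhds
  have : TopologicalSpace.SeparableSpace X₀ :=
    (TopologicalSpace.IsSeparable.of_separableSpace X₀).separableSpace
  have : Nonempty X₀ := hX₀.nonempty.to_subtype
  obtain ⟨z, hz⟩ := TopologicalSpace.exists_dense_seq X₀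
  have hzX : DenseRange fun l => (z l : X) := hX₀.denseRange_val.comp hz continuous_subtype_val
  -- every pair (operator, dense vector) is visited at infinitely many indices `s`
  let p : ℕ → ℕ × X₀ := fun s =>
    ((Nat.unpair (Nat.unpair s).1).1, z (Nat.unpair (Nat.unpair s).1).2)
  obtain ⟨x, hx⟩ := exists_orbits_frequently_near hW hN h4 p
  refine ⟨x, fun i U hU hUne => ?_⟩
  obtain ⟨l, hl⟩ := hzX.exists_mem_open hU hUne
  have hUl : (fun w => (z l : X) + w) ⁻¹' U ∈ 𝓝 (0 : X) :=
    (continuous_const.add continuous_id).continuousAt.preimage_mem_nhds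
      (by simpa using hU.mem_nhds hl)
  obtain ⟨k, hk⟩ := hW.hasAntitoneBasis.mem_iff.1 hUl
  obtain ⟨A, hA, hAx⟩ := hx (Nat.pair (Nat.pair i l) k)
  refine hA.trans_le (lowerDensity_mono fun M hM => ?_)
  have := hk (hW.antitone (Nat.right_le_pair _ _) (hAx M hM))
  simpa [p] using this

/-- Corollary 2.4 (common Frequent Hypercyclicity Criterion). -/
theorem stmt2 {𝕜 X : Type*} [NontriviallyNormedField 𝕜]
    [AddCommGroup X] [UniformSpace X] [IsUniformAddGroup X]
    [Module 𝕜 X] [ContinuousSMul 𝕜 X] [CompleteSpace X]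
    [TopologicalSpace.MetrizableSpace X] [TopologicalSpace.SeparableSpace X]
    (T : ℕ → X →L[𝕜] X)
    (X₀ : Set X) (hX₀ : Dense X₀)
    (S : ℕ → X₀ → X₀)
    (c : ℝ) (hc : 1 < c)
    -- (1) ∑_{n≥0} T_i^n(x) and ∑_{n≥0} S_i^n(x) converge unconditionally, uniformly in i
    (h1T : ∀ x : X₀, UnifUncondConv
      (fun i : ℕ => fun n => ((T i) ^ n) (x : X)) (fun _ => Set.univ))
    (h1S : ∀ x : X₀, UnifUncondConv
      (fun i : ℕ => fun n => (((S i)^[n] x : X₀) : X)) (fun _ => Set.univ))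
    -- (2) ∑_{n ≥ (c−1)m} T_i^m (S_j^{m+n}(x)), uniformly in m and i ≠ j
    (h2 : ∀ x : X₀, UnifUncondConv
      (fun v : {v : ℕ × ℕ × ℕ // v.1 ≠ v.2.1} => fun n =>
        ((T v.val.1) ^ v.val.2.2) (((S v.val.2.1)^[v.val.2.2 + n] x : X₀) : X))
      (fun v => {n | (c - 1) * (v.val.2.2 : ℝ) ≤ (n : ℝ)}))
    -- (3) ∑_{(c−1)m/c ≤ n ≤ m} T_i^m (S_j^{m−n}(x)), uniformly in m and i ≠ j
    (h3 : ∀ x : X₀, UnifUncondConv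
      (fun v : {v : ℕ × ℕ × ℕ // v.1 ≠ v.2.1} => fun n =>
        ((T v.val.1) ^ v.val.2.2) (((S v.val.2.1)^[v.val.2.2 - n] x : X₀) : X))
      (fun v => {n | (c - 1) / c * (v.val.2.2 : ℝ) ≤ (n : ℝ) ∧ n ≤ v.val.2.2}))
    -- (4) T_i(S_i(x)) = x
    (h4 : ∀ x : X₀, ∀ i : ℕ, (T i) ((S i x : X₀) : X) = (x : X)) :
    ∃ x : X, ∀ i : ℕ, ∀ U : Set X, IsOpen U → U.Nonempty →
      0 < lowerDensity {n : ℕ | (((T i) ^ n) x) ∈ U} :=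
  stmt2_general T X₀ hX₀ S c hc h1T h1S h2 h3 h4
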